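/- Let Ω ⊂ ℝⁿ be a convex open set, let u : Ω → ℝ be twice differentiable, and suppose the concavity function C_u attains a local maximum at an interior point (x₁, x₃, λ) ∈ Ω × Ω × (0,1), with x₂ := λx₃ + (1−λ)x₁ ∈ Ω. Then for every symmetric positive semidefinite n×n real matrix A = (a^{ij}) one has ∑_{i,j=1}^n a^{ij} ( D²_{ij}u(x₂) − λ D²_{ij}u(x₃) − (1−λ) D²_{ij}u(x₁) ) ≤ 0, where D²_{ij}u denotes the second partial derivatives of u. -/

import Mathlib

/-! Translating `x₁` and `x₃` by the same vector `t • v` translates `x₂` by `t • v` as well, so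
`t ↦ C_u(x₁ + t • v, x₃ + t • v, λ)` has a local maximum at `0`; its second derivative there,
`D²u(x₂)(v, v) − λ D²u(x₃)(v, v) − (1 − λ) D²u(x₁)(v, v)`, is therefore `≤ 0`. Thus the matrix
`M = D²u(x₂) − λ D²u(x₃) − (1 − λ) D²u(x₁)` is a nonpositive quadratic form, and writing
`A = Bᵀ B` gives `∑ aᶦʲ Mᵢⱼ = ∑ₖ bₖᵀ M bₖ ≤ 0`, where `bₖ` are the rows of `B`. -/

open Set Filter Topology Matrix

/-- The second partial derivative `D²_{ij} u (x)`. -/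
noncomputable def secondPartial {n : ℕ} (u : EuclideanSpace ℝ (Fin n) → ℝ)
    (x : EuclideanSpace ℝ (Fin n)) (i j : Fin n) : ℝ :=
  fderiv ℝ (fun y => fderiv ℝ u y (EuclideanSpace.single j 1)) x (EuclideanSpace.single i 1)

theorem IsLocalMax.nonpos_of_hasDerivAt_of_hasDerivAt {f f' : ℝ → ℝ} {a c : ℝ}
    (hmax : IsLocalMax f a) (hf : ∀ᶠ t in 𝓝 a, HasDerivAt f (f' t) t)
    (hf' : HasDerivAt f' c a) : c ≤ 0 := by
  by_contra! hc
  -- for `c > 0` the second-derivative test makes `a` also a local minimum, so `f` is locally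
  -- constant near `a` and `c` would be `0`
  have hderiv : deriv f =ᶠ[𝓝 a] f' := hf.mono fun t ht => ht.deriv
  have hmin : IsLocalMin f a :=
    isLocalMin_of_deriv_deriv_pos (by rwa [hderiv.deriv_eq, hf'.deriv])
      (by rw [hderiv.eq_of_nhds]; exact hmax.hasDerivAt_eq_zero hf.self_of_nhds)
      hf.self_of_nhds.continuousAt
  have hconst : f =ᶠ[𝓝 a] fun _ => f a :=
    (hmin.and hmax).mono fun t ht => le_antisymm ht.2 ht.1
  have hderiv_zero : f' =ᶠ[𝓝 a] fun _ => 0 :=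
    hderiv.symm.trans <| hconst.eventuallyEq_nhds.mono fun t ht => by rw [ht.deriv_eq, deriv_const]
  exact hc.ne' (hf'.unique ((hasDerivAt_const a 0).congr_of_eventuallyEq hderiv_zero))

section Line

variable {E F : Type*} [NormedAddCommGroup E] [NormedSpace ℝ E]
  [NormedAddCommGroup F] [NormedSpace ℝ F]

theorem HasFDerivAt.hasDerivAt_add_smul {g : E → F} {g' : E →L[ℝ] F} {x v : E} {t : ℝ}
    (hg : HasFDerivAt g g' (x + t • v)) : HasDerivAt (fun s : ℝ => g (x + s • v)) (g' v) t :=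
  hg.comp_hasDerivAt t (((hasDerivAt_id t).smul_const v).const_add x |>.congr_deriv (one_smul ℝ v))

theorem eventually_hasDerivAt_add_smul {Ω : Set E} {u : E → F} {x : E} (hΩ : IsOpen Ω)
    (hu : DifferentiableOn ℝ u Ω) (hx : x ∈ Ω) (v : E) :
    ∀ᶠ t in 𝓝 (0 : ℝ), HasDerivAt (fun s : ℝ => u (x + s • v)) (fderiv ℝ u (x + t • v) v) t := by
  have hline : Tendsto (fun t : ℝ => x + t • v) (𝓝 0) (𝓝 x) := by
    simpa using (Continuous.tendsto (by fun_prop) 0 : Tendsto (fun t : ℝ => x + t • v) _ _)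
  filter_upwards [hline.eventually (hΩ.eventually_mem hx)] with t ht
  exact (hu.differentiableAt (hΩ.mem_nhds ht)).hasFDerivAt.hasDerivAt_add_smul

theorem hasDerivAt_fderiv_add_smul_apply {u : E → F} {x : E}
    (hu : DifferentiableAt ℝ (fderiv ℝ u) x) (v : E) :
    HasDerivAt (fun s : ℝ => fderiv ℝ u (x + s • v) v) (fderiv ℝ (fderiv ℝ u) x v v) 0 := by
  have h : HasFDerivAt (fderiv ℝ u) (fderiv ℝ (fderiv ℝ u) x) (x + (0 : ℝ) • v) := by
    simpa using hu.hasFDerivAt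
  simpa using h.hasDerivAt_add_smul.clm_apply (hasDerivAt_const (0 : ℝ) v)

end Line

section Concavity

variable {E : Type*} [NormedAddCommGroup E] [NormedSpace ℝ E]

def concavityFunction (u : E → ℝ) (p : E × E × ℝ) : ℝ :=
  u (p.2.2 • p.2.1 + (1 - p.2.2) • p.1) - p.2.2 * u p.2.1 - (1 - p.2.2) * u p.1

theorem IsLocalMax.concavityFunction_restrict_line {u : E → ℝ} {x₁ x₃ : E} {lam : ℝ}
    (hmax : IsLocalMax (concavityFunction u) (x₁, x₃, lam)) (v : E) :
    IsLocalMax (fun t : ℝ => u ((lam • x₃ + (1 - lam) • x₁) + t • v)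
      - lam * u (x₃ + t • v) - (1 - lam) * u (x₁ + t • v)) 0 := by
  have hcont : ContinuousAt (fun t : ℝ => (x₁ + t • v, x₃ + t • v, lam)) 0 := by fun_prop
  convert IsLocalMax.comp_continuous (f := concavityFunction u) (b := 0)
    (by simpa using hmax) hcont using 2 with t
  rw [Function.comp_apply, concavityFunction,
    show lam • (x₃ + t • v) + (1 - lam) • (x₁ + t • v) = lam • x₃ + (1 - lam) • x₁ + t • v by
      module]

theorem IsLocalMax.concavityFunction_fderiv_fderiv_nonpos {Ω : Set E} {u : E → ℝ}
    {x₁ x₃ : E} {lam : ℝ} (hmax : IsLocalMax (concavityFunction u) (x₁, x₃, lam))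
    (hΩ : IsOpen Ω) (hu : DifferentiableOn ℝ u Ω) (hu2 : DifferentiableOn ℝ (fderiv ℝ u) Ω)
    (hx₁ : x₁ ∈ Ω) (hx₃ : x₃ ∈ Ω) (hx₂ : lam • x₃ + (1 - lam) • x₁ ∈ Ω) (v : E) :
    fderiv ℝ (fderiv ℝ u) (lam • x₃ + (1 - lam) • x₁) v v - lam * fderiv ℝ (fderiv ℝ u) x₃ v v
      - (1 - lam) * fderiv ℝ (fderiv ℝ u) x₁ v v ≤ 0 := by
  have hu2At : ∀ x ∈ Ω, DifferentiableAt ℝ (fderiv ℝ u) x :=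
    fun x hx => hu2.differentiableAt (hΩ.mem_nhds hx)
  refine (hmax.concavityFunction_restrict_line v).nonpos_of_hasDerivAt_of_hasDerivAt ?_
    (((hasDerivAt_fderiv_add_smul_apply (hu2At _ hx₂) v).sub
      ((hasDerivAt_fderiv_add_smul_apply (hu2At _ hx₃) v).const_mul lam)).sub
      ((hasDerivAt_fderiv_add_smul_apply (hu2At _ hx₁) v).const_mul (1 - lam)))
  filter_upwards [eventually_hasDerivAt_add_smul hΩ hu hx₂ v,
    eventually_hasDerivAt_add_smul hΩ hu hx₃ v, eventually_hasDerivAt_add_smul hΩ hu hx₁ v]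
    with t h₂ h₃ h₁
  exact (h₂.sub (h₃.const_mul lam)).sub (h₁.const_mul (1 - lam))

end Concavity

section Coordinates

variable {n : ℕ} {u : EuclideanSpace ℝ (Fin n) → ℝ} {x : EuclideanSpace ℝ (Fin n)}

theorem secondPartial_eq_fderiv_fderiv_apply (hu : DifferentiableAt ℝ (fderiv ℝ u) x)
    (i j : Fin n) :
    secondPartial u x i j
      = fderiv ℝ (fderiv ℝ u) x (EuclideanSpace.single i 1) (EuclideanSpace.single j 1) := by
  rw [secondPartial, fderiv_clm_apply hu (differentiableAt_const _)]
  simp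

theorem fderiv_fderiv_apply_eq_dotProduct_mulVec (hu : DifferentiableAt ℝ (fderiv ℝ u) x)
    (v w : EuclideanSpace ℝ (Fin n)) :
    fderiv ℝ (fderiv ℝ u) x v w = v.ofLp ⬝ᵥ Matrix.of (secondPartial u x) *ᵥ w.ofLp := by
  let b := (EuclideanSpace.basisFun (Fin n) ℝ).toBasis
  have hmatrix : LinearMap.toMatrix₂ b b (fderiv ℝ (fderiv ℝ u) x).toLinearMap₁₂
      = Matrix.of (secondPartial u x) := by
    ext i j
    simp [b, secondPartial_eq_fderiv_fderiv_apply hu]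
  exact hmatrix ▸
    apply_eq_dotProduct_toMatrix₂_mulVec b b (fderiv ℝ (fderiv ℝ u) x).toLinearMap₁₂ v w

end Coordinates

open scoped MatrixOrder in
theorem Matrix.PosSemidef.sum_mul_nonpos_of_dotProduct_mulVec_nonpos {ι : Type*} [Fintype ι]
    {A M : Matrix ι ι ℝ} (hA : A.PosSemidef) (hM : ∀ v, v ⬝ᵥ M *ᵥ v ≤ 0) :
    ∑ i, ∑ j, A i j * M i j ≤ 0 := by
  classical
  obtain ⟨B, rfl⟩ := CStarAlgebra.nonneg_iff_eq_star_mul_self.mp hA.nonneg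
  calc ∑ i, ∑ j, (star B * B) i j * M i j = ∑ k, B k ⬝ᵥ M *ᵥ B k := by
        simp only [mul_apply, star_apply, star_trivial, dotProduct, mulVec, Finset.sum_mul,
          Finset.mul_sum]
        conv_rhs => rw [Finset.sum_comm]; enter [2, i]; rw [Finset.sum_comm]
        simp only [mul_comm, mul_left_comm]
    _ ≤ 0 := Finset.sum_nonpos fun k _ => hM (B k)

theorem stmt1_general {n : ℕ} (Ω : Set (EuclideanSpace ℝ (Fin n)))
    (hΩo : IsOpen Ω)
    (u : EuclideanSpace ℝ (Fin n) → ℝ)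
    (hu : DifferentiableOn ℝ u Ω) (hu2 : DifferentiableOn ℝ (fderiv ℝ u) Ω)
    (x₁ x₃ : EuclideanSpace ℝ (Fin n)) (lam : ℝ)
    (hx₁ : x₁ ∈ Ω) (hx₃ : x₃ ∈ Ω)
    (hx₂ : lam • x₃ + (1 - lam) • x₁ ∈ Ω)
    (hmax : IsLocalMax
      (fun p : EuclideanSpace ℝ (Fin n) × EuclideanSpace ℝ (Fin n) × ℝ =>
        u (p.2.2 • p.2.1 + (1 - p.2.2) • p.1) - p.2.2 * u p.2.1 - (1 - p.2.2) * u p.1)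
      (x₁, x₃, lam))
    (A : Matrix (Fin n) (Fin n) ℝ) (hA : A.PosSemidef) :
    ∑ i, ∑ j, A i j *
        (secondPartial u (lam • x₃ + (1 - lam) • x₁) i j
          - lam * secondPartial u x₃ i j - (1 - lam) * secondPartial u x₁ i j) ≤ 0 := by
  have hu2At : ∀ x ∈ Ω, DifferentiableAt ℝ (fderiv ℝ u) x :=
    fun x hx => hu2.differentiableAt (hΩo.mem_nhds hx)
  refine hA.sum_mul_nonpos_of_dotProduct_mulVec_nonpos fun v => ?_
  have key := IsLocalMax.concavityFunction_fderiv_fderiv_nonpos hmax hΩo hu hu2 hx₁ hx₃ hx₂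
    (WithLp.toLp 2 v)
  simp only [fderiv_fderiv_apply_eq_dotProduct_mulVec (hu2At _ hx₁),
    fderiv_fderiv_apply_eq_dotProduct_mulVec (hu2At _ hx₂),
    fderiv_fderiv_apply_eq_dotProduct_mulVec (hu2At _ hx₃)] at key
  convert key using 1
  simp only [dotProduct, mulVec, Finset.mul_sum, ← Finset.sum_sub_distrib]
  refine Finset.sum_congr rfl fun i _ => Finset.sum_congr rfl fun j _ => ?_
  simp only [of_apply]
  ring

/-- If the concavity function of a twice differentiable `u` on a convex
open set `Ω` attains a local maximum at an interior point `(x₁,x₃,λ) ∈ Ω × Ω × (0,1)`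
(with `x₂ := λx₃+(1−λ)x₁ ∈ Ω`), then for every symmetric positive semidefinite
real `n×n` matrix `A` one has
`∑ᵢⱼ aᶦʲ (D²ᵢⱼu(x₂) − λ D²ᵢⱼu(x₃) − (1−λ) D²ᵢⱼu(x₁)) ≤ 0`. -/
theorem stmt1 {n : ℕ} (Ω : Set (EuclideanSpace ℝ (Fin n)))
    (hΩo : IsOpen Ω) (hΩc : Convex ℝ Ω)
    (u : EuclideanSpace ℝ (Fin n) → ℝ)
    (hu : DifferentiableOn ℝ u Ω) (hu2 : DifferentiableOn ℝ (fderiv ℝ u) Ω)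
    (x₁ x₃ : EuclideanSpace ℝ (Fin n)) (lam : ℝ)
    (hx₁ : x₁ ∈ Ω) (hx₃ : x₃ ∈ Ω) (hlam : lam ∈ Ioo (0 : ℝ) 1)
    (hx₂ : lam • x₃ + (1 - lam) • x₁ ∈ Ω)
    (hmax : IsLocalMax
      (fun p : EuclideanSpace ℝ (Fin n) × EuclideanSpace ℝ (Fin n) × ℝ =>
        u (p.2.2 • p.2.1 + (1 - p.2.2) • p.1) - p.2.2 * u p.2.1 - (1 - p.2.2) * u p.1)
      (x₁, x₃, lam))
    (A : Matrix (Fin n) (Fin n) ℝ) (hA : A.PosSemidef) :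
    ∑ i, ∑ j, A i j *
        (secondPartial u (lam • x₃ + (1 - lam) • x₁) i j
          - lam * secondPartial u x₃ i j - (1 - lam) * secondPartial u x₁ i j) ≤ 0 :=
  stmt1_general Ω hΩo u hu hu2 x₁ x₃ lam hx₁ hx₃ hx₂ hmax A hA
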